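/- If t is a positive integer with t ≡ 0 (mod 18), then a₃(t) = (2t² − 32t + 144)/9. -/

import Mathlib

/-- A 3×3 magic square with magic sum `t`: pairwise distinct positive integer entries,
all row sums, column sums, and both main diagonal sums equal to `t`. -/
def IsMagicSquare3 (t : ℕ) (M : Matrix (Fin 3) (Fin 3) ℕ) : Prop :=
  (∀ i j, 0 < M i j) ∧
  (Function.Injective fun p : Fin 3 × Fin 3 => M p.1 p.2) ∧
  (∀ i, ∑ j, M i j = t) ∧
  (∀ j, ∑ i, M i j = t) ∧
  M 0 0 + M 1 1 + M 2 2 = t ∧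
  M 0 2 + M 1 1 + M 2 0 = t

/-- The number of 3×3 magic squares with magic sum `t`. -/
noncomputable def a3 (t : ℕ) : ℕ := Set.ncard {M : Matrix (Fin 3) (Fin 3) ℕ | IsMagicSquare3 t M}

/-!
A magic square with magic sum `t` has centre `c = t / 3` (the middle row, the middle column and
both diagonals cover the square once and the centre three more times, so `4t = 3t + 3c`), and
it is then Lucas's square

    c + a      c - a - b   c + b
    c - a + b  c           c + a - b
    c - b      c + a + b   c - a

for a unique `(a, b) ∈ ℤ²`. Its entries are positive iff `|a| + |b| ≤ n := c - 1`, and pairwise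
distinct iff `(a, b)` avoids the eight lines `a = 0`, `b = 0`, `a = ±b`, `b = ±2a`, `a = ±2b`.
So `a₃(3c)` is the number `2n² + 2n + 1` of lattice points of the diamond `|a| + |b| ≤ n`, minus
the origin and the `2⌊n / k⌋` other diamond points on each line, `k` being the `ℓ¹`-norm of its
primitive direction (`k = 1, 1, 2, 2, 3, 3, 3, 3`). The congruence `t ≡ 0 (mod 18)` makes
`n = t / 3 - 1 ≡ 5 (mod 6)`, so that `⌊n / 2⌋` and `⌊n / 3⌋` are polynomial in `t`.
-/

open Finset

noncomputable def diamond (n : ℕ) : Finset (ℤ × ℤ) :=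
  (Icc (-n : ℤ) n ×ˢ Icc (-n : ℤ) n).filter fun p => p.1.natAbs + p.2.natAbs ≤ n

theorem mem_diamond {n : ℕ} {p : ℤ × ℤ} : p ∈ diamond n ↔ p.1.natAbs + p.2.natAbs ≤ n := by
  simp only [diamond, mem_filter, mem_product, mem_Icc, and_iff_right_iff_imp]
  omega

theorem sum_Icc_natAbs (n : ℕ) : ∑ x ∈ Icc (-n : ℤ) n, x.natAbs = n * (n + 1) := by
  induction n with
  | zero => simp
  | succ n ih =>
    have hIcc : Icc (-(n + 1 : ℕ) : ℤ) (n + 1 : ℕ) =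
        insert (-(n + 1 : ℤ)) (insert (n + 1 : ℤ) (Icc (-n : ℤ) n)) := by
      ext x; simp only [mem_Icc, mem_insert]; omega
    rw [hIcc, sum_insert (by simp; omega), sum_insert (by simp), ih,
      show (-(n + 1 : ℤ)).natAbs = n + 1 by omega, show (n + 1 : ℤ).natAbs = n + 1 by omega]
    ring

theorem card_diamond (n : ℕ) : #(diamond n) = 2 * n ^ 2 + 2 * n + 1 := by
  have hfiber (x : ℤ) (hx : x ∈ Icc (-n : ℤ) n) :
      #((diamond n).filter (·.1 = x)) + 2 * x.natAbs = 2 * n + 1 := by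
    rw [mem_Icc] at hx
    have : (diamond n).filter (·.1 = x) =
        {x} ×ˢ Icc (-(n - x.natAbs : ℕ) : ℤ) (n - x.natAbs : ℕ) := by
      ext ⟨y, z⟩
      simp only [mem_filter, mem_diamond, mem_product, mem_singleton, mem_Icc]
      omega
    rw [this, card_product, card_singleton, Int.card_Icc]
    omega
  have hsum : #(diamond n) + 2 * (n * (n + 1)) = (2 * n + 1) * (2 * n + 1) := by
    rw [card_eq_sum_card_fiberwise (t := Icc (-n : ℤ) n) (f := Prod.fst)
      (fun p hp => by rw [mem_coe, mem_diamond] at hp; rw [mem_coe, mem_Icc]; omega),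
      ← sum_Icc_natAbs, mul_sum, ← sum_add_distrib, sum_congr rfl hfiber, sum_const,
      Int.card_Icc, smul_eq_mul]
    congr 1
    omega
  linarith

noncomputable def puncturedSegment (m : ℕ) (d : ℤ × ℤ) : Finset (ℤ × ℤ) :=
  ((Icc (-m : ℤ) m).erase 0).image (· • d)

theorem card_puncturedSegment (m : ℕ) {d : ℤ × ℤ} (hd : d ≠ 0) :
    #(puncturedSegment m d) = 2 * m := by
  rw [puncturedSegment, card_image_of_injective _ (smul_left_injective ℤ hd),
    card_erase_of_mem (by simp), Int.card_Icc]
  omega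

theorem disjoint_puncturedSegment {m m' : ℕ} {d e : ℤ × ℤ} (hde : d.1 * e.2 ≠ d.2 * e.1) :
    Disjoint (puncturedSegment m d) (puncturedSegment m' e) := by
  simp only [puncturedSegment, disjoint_left, mem_image, mem_erase, not_exists, not_and]
  rintro _ ⟨w, ⟨hw, -⟩, rfl⟩ v - hvw
  obtain ⟨h1, h2⟩ := Prod.ext_iff.mp hvw
  simp only [Prod.smul_fst, Prod.smul_snd, smul_eq_mul] at h1 h2
  have : w * (d.1 * e.2 - d.2 * e.1) = 0 := by linear_combination e.1 * h2 - e.2 * h1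
  exact hde (sub_eq_zero.mp ((mul_eq_zero.mp this).resolve_left hw))

def collisionDirections : Finset (ℤ × ℤ) :=
  {(1, 0), (0, 1), (1, 1), (1, -1), (1, 2), (1, -2), (2, 1), (-2, 1)}

theorem filter_diamond_onLine_eq_puncturedSegment {n : ℕ} {d : ℤ × ℤ}
    (hd : d ∈ collisionDirections) :
    (diamond n).filter (fun p => p ≠ 0 ∧ d.1 * p.2 = d.2 * p.1) =
      puncturedSegment (n / (d.1.natAbs + d.2.natAbs)) d := by
  simp only [collisionDirections, mem_insert, mem_singleton] at hd
  rcases hd with rfl | rfl | rfl | rfl | rfl | rfl | rfl | rfl <;>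
  · ext ⟨x, y⟩
    simp [mem_diamond, puncturedSegment]
    omega

noncomputable def collisionSet (n : ℕ) : Finset (ℤ × ℤ) :=
  (diamond n).filter fun p => ∃ d ∈ collisionDirections, d.1 * p.2 = d.2 * p.1

noncomputable def goodSet (n : ℕ) : Finset (ℤ × ℤ) :=
  (diamond n).filter fun p => ¬∃ d ∈ collisionDirections, d.1 * p.2 = d.2 * p.1

theorem card_goodSet_add_card_collisionSet (n : ℕ) :
    #(goodSet n) + #(collisionSet n) = #(diamond n) := by
  rw [add_comm]
  exact card_filter_add_card_filter_not _

theorem collisionSet_erase_zero (n : ℕ) :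
    (collisionSet n).erase 0 = collisionDirections.biUnion
      fun d => puncturedSegment (n / (d.1.natAbs + d.2.natAbs)) d := by
  rw [biUnion_congr rfl fun d hd => (filter_diamond_onLine_eq_puncturedSegment hd).symm]
  ext p
  simp only [collisionSet, mem_erase, mem_filter, mem_biUnion]
  constructor
  · rintro ⟨hp, hdia, d, hd, hline⟩
    exact ⟨d, hd, hdia, hp, hline⟩
  · rintro ⟨d, hd, hdia, hp, hline⟩
    exact ⟨hp, hdia, d, hd, hline⟩

theorem card_collisionSet (n : ℕ) :
    #(collisionSet n) = 1 + 4 * n + 4 * (n / 2) + 8 * (n / 3) := by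
  have hzero : (0 : ℤ × ℤ) ∈ collisionSet n :=
    mem_filter.mpr ⟨mem_diamond.mpr (by simp), (1, 0), by simp [collisionDirections]⟩
  have hdisj : (collisionDirections : Set (ℤ × ℤ)).PairwiseDisjoint
      fun d => puncturedSegment (n / (d.1.natAbs + d.2.natAbs)) d := by
    have hcross : ∀ d ∈ collisionDirections, ∀ e ∈ collisionDirections,
        d ≠ e → d.1 * e.2 ≠ d.2 * e.1 := by decide
    exact fun d hd e he hde => disjoint_puncturedSegment (hcross d hd e he hde)
  have hnonzero : (0 : ℤ × ℤ) ∉ collisionDirections := by decide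
  rw [← card_erase_add_one hzero, collisionSet_erase_zero, card_biUnion hdisj,
    sum_congr rfl fun d hd => card_puncturedSegment _ (ne_of_mem_of_not_mem hd hnonzero)]
  simp only [collisionDirections]
  repeat rw [sum_insert (by decide)]
  rw [sum_singleton]
  norm_num
  omega

/-- `Int.toNat` truncates only at nonpositive entries, which `p ∈ goodSet n` and `c = n + 1`
exclude. -/
def lucasSquare (c : ℤ) (p : ℤ × ℤ) : Matrix (Fin 3) (Fin 3) ℕ :=
  (!![c + p.1, c - p.1 - p.2, c + p.2;
      c - p.1 + p.2, c, c + p.1 - p.2;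
      c - p.2, c + p.1 + p.2, c - p.1]).map Int.toNat

theorem mk_mem_goodSet {n : ℕ} {a b : ℤ} :
    (a, b) ∈ goodSet n ↔ a.natAbs + b.natAbs ≤ n ∧ a ≠ 0 ∧ b ≠ 0 ∧ a ≠ b ∧ a ≠ -b ∧
      b ≠ 2 * a ∧ b ≠ -2 * a ∧ a ≠ 2 * b ∧ a ≠ -2 * b := by
  rw [goodSet, mem_filter, mem_diamond]
  simp only [collisionDirections, mem_insert, mem_singleton, exists_eq_or_imp, exists_eq_left]
  constructor <;> rintro ⟨hdia, h⟩ <;> refine ⟨hdia, ?_⟩ <;> omega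

theorem isMagicSquare3_lucasSquare {n : ℕ} {p : ℤ × ℤ} (hp : p ∈ goodSet n) :
    IsMagicSquare3 (3 * (n + 1)) (lucasSquare (n + 1) p) := by
  obtain ⟨a, b⟩ := p
  rw [mk_mem_goodSet] at hp
  refine ⟨?_, ?_, ?_, ?_, ?_, ?_⟩
  · intro i j
    fin_cases i <;> fin_cases j <;>
      simp only [lucasSquare, Matrix.map_apply, Matrix.of_apply, Matrix.cons_val, Fin.zero_eta,
        Fin.mk_one, Fin.reduceFinMk] <;> omega
  · rintro ⟨i, j⟩ ⟨k, l⟩ h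
    fin_cases i <;> fin_cases j <;> fin_cases k <;> fin_cases l <;>
      first
      | rfl
      | simp only [lucasSquare, Matrix.map_apply, Matrix.of_apply, Matrix.cons_val, Fin.zero_eta,
          Fin.mk_one, Fin.reduceFinMk] at h
        omega
  · intro i
    fin_cases i <;>
      simp only [Fin.sum_univ_three, lucasSquare, Matrix.map_apply, Matrix.of_apply,
        Matrix.cons_val, Fin.zero_eta, Fin.mk_one, Fin.reduceFinMk] <;> omega
  · intro j
    fin_cases j <;>
      simp only [Fin.sum_univ_three, lucasSquare, Matrix.map_apply, Matrix.of_apply,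
        Matrix.cons_val, Fin.zero_eta, Fin.mk_one, Fin.reduceFinMk] <;> omega
  all_goals
    simp only [lucasSquare, Matrix.map_apply, Matrix.of_apply, Matrix.cons_val]
    omega

theorem exists_lucasSquare_eq {n : ℕ} {M : Matrix (Fin 3) (Fin 3) ℕ}
    (hM : IsMagicSquare3 (3 * (n + 1)) M) : ∃ p ∈ goodSet n, lucasSquare (n + 1) p = M := by
  obtain ⟨hpos, hinj, hrow, hcol, hdiag, hanti⟩ := hM
  have hne (i j k l : Fin 3) (hijkl : (i, j) ≠ (k, l)) : M i j ≠ M k l :=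
    fun h => hijkl (hinj h)
  have r0 := hrow 0; have r1 := hrow 1; have r2 := hrow 2
  have c0 := hcol 0; have c1 := hcol 1; have c2 := hcol 2
  simp only [Fin.sum_univ_three] at r0 r1 r2 c0 c1 c2
  have := hpos 0 1; have := hpos 1 0; have := hpos 1 2; have := hpos 2 1
  have := hpos 2 0; have := hpos 2 2
  -- one coincidence of entries for each of the eight lines, in the order of `mk_mem_goodSet`
  have := hne 0 0 1 1 (by decide); have := hne 0 2 1 1 (by decide)
  have := hne 0 0 0 2 (by decide); have := hne 0 0 2 0 (by decide)
  have := hne 0 0 1 0 (by decide); have := hne 2 2 2 1 (by decide)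
  have := hne 0 2 1 2 (by decide); have := hne 2 0 2 1 (by decide)
  refine ⟨(M 0 0 - (n + 1 : ℤ), M 0 2 - (n + 1 : ℤ)), mk_mem_goodSet.mpr (by omega), ?_⟩
  ext i j
  fin_cases i <;> fin_cases j <;>
    simp only [lucasSquare, Matrix.map_apply, Matrix.of_apply, Matrix.cons_val, Fin.zero_eta,
      Fin.mk_one, Fin.reduceFinMk] <;> omega

theorem a3_three_mul_add_one (n : ℕ) : a3 (3 * (n + 1)) = #(goodSet n) := by
  have hinj : Set.InjOn (lucasSquare (n + 1)) (goodSet n) := by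
    rintro ⟨a, b⟩ hp ⟨a', b'⟩ hq h
    rw [mem_coe, mk_mem_goodSet] at hp hq
    have h00 := congrFun (congrFun h 0) 0
    have h02 := congrFun (congrFun h 0) 2
    simp only [lucasSquare, Matrix.map_apply, Matrix.of_apply, Matrix.cons_val] at h00 h02
    ext <;> omega
  have hset : {M | IsMagicSquare3 (3 * (n + 1)) M} = lucasSquare (n + 1) '' goodSet n := by
    ext M
    exact ⟨exists_lucasSquare_eq, fun ⟨p, hp, hpM⟩ => hpM ▸ isMagicSquare3_lucasSquare hp⟩
  rw [a3, hset, hinj.ncard_image, Set.ncard_coe_finset]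

theorem a3_formula_mod18_0 (t : ℕ) (ht : 0 < t) (h : t % 18 = 0) :
    (a3 t : ℚ) = (2 * (t : ℚ) ^ 2 - 32 * (t : ℚ) + 144) / 9 := by
  obtain ⟨m, rfl⟩ : ∃ m, t = 3 * (6 * m + 5 + 1) := ⟨t / 18 - 1, by omega⟩
  have hcount := card_goodSet_add_card_collisionSet (6 * m + 5)
  rw [← a3_three_mul_add_one, card_collisionSet, card_diamond,
    show (6 * m + 5) / 2 = 3 * m + 2 by omega, show (6 * m + 5) / 3 = 2 * m + 1 by omega] at hcount
  qify at hcount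
  push_cast at hcount ⊢
  linarith
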